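/- The anticipating Volterra integral equation has a unique solution on (0, τ): if K : ℝ → ℝ satisfies K(t) = 1 − ∑_{u ≤ t} K(u) · ΔC(u)/Y(u+) for every t with 0 < t < τ, then K(t) = ∏_{u ≤ t} (1 − ΔC(u)/Y†(u)) for every t with 0 < t < τ. -/

import Mathlib

open Finset
open scoped Classical

noncomputable section

namespace SurvStmt

/-- The finite set of distinct observed times `{X_1, …, X_n}`. -/
def times {n : ℕ} (X : Fin n → ℝ) : Finset ℝ := Finset.image X Finset.univ

/-- `Y(t) = #{i : X_i ≥ t}`, as a real number. -/
def Yat {n : ℕ} (X : Fin n → ℝ) (t : ℝ) : ℝ :=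
  ((Finset.univ.filter (fun i => t ≤ X i)).card : ℝ)

/-- `Y(t+) = #{i : X_i > t}`, as a real number. -/
def Yplus {n : ℕ} (X : Fin n → ℝ) (t : ℝ) : ℝ :=
  ((Finset.univ.filter (fun i => t < X i)).card : ℝ)

/-- `ΔN(t) = #{i : X_i = t, D_i = 1}`, as a real number. -/
def dN {n : ℕ} (X : Fin n → ℝ) (D : Fin n → Bool) (t : ℝ) : ℝ :=
  ((Finset.univ.filter (fun i => X i = t ∧ D i = true)).card : ℝ)

/-- `ΔC(t) = #{i : X_i = t, D_i = 0}`, as a real number. -/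
def dC {n : ℕ} (X : Fin n → ℝ) (D : Fin n → Bool) (t : ℝ) : ℝ :=
  ((Finset.univ.filter (fun i => X i = t ∧ D i = false)).card : ℝ)

/-- `Y†(t) = Y(t) − ΔN(t)`. -/
def Ydag {n : ℕ} (X : Fin n → ℝ) (D : Fin n → Bool) (t : ℝ) : ℝ :=
  Yat X t - dN X D t

/-- `τ = max_i X_i`, the largest observation time (0 if there is no data). -/
def tau {n : ℕ} (X : Fin n → ℝ) : ℝ := WithBot.unbotD 0 (times X).max

/-- Censoring product-limit estimator `K̂(t) = ∏_{u ≤ t} (1 − ΔC(u)/Y†(u))`. -/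
def Khat {n : ℕ} (X : Fin n → ℝ) (D : Fin n → Bool) (t : ℝ) : ℝ :=
  ∏ u ∈ (times X).filter (fun u => u ≤ t), (1 - dC X D u / Ydag X D u)

/-- Left limit `K̂(t−) = ∏_{u < t} (1 − ΔC(u)/Y†(u))`. -/
def Kminus {n : ℕ} (X : Fin n → ℝ) (D : Fin n → Bool) (t : ℝ) : ℝ :=
  ∏ u ∈ (times X).filter (fun u => u < t), (1 - dC X D u / Ydag X D u)

/-- Failure product-limit estimator `Ŝ_PL(t) = ∏_{u ≤ t} (1 − ΔN(u)/Y(u))`. -/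
def SPL {n : ℕ} (X : Fin n → ℝ) (D : Fin n → Bool) (t : ℝ) : ℝ :=
  ∏ u ∈ (times X).filter (fun u => u ≤ t), (1 - dN X D u / Yat X u)

/-- Left limit `Ŝ_PL(t−) = ∏_{u < t} (1 − ΔN(u)/Y(u))`. -/
def SPLminus {n : ℕ} (X : Fin n → ℝ) (D : Fin n → Bool) (t : ℝ) : ℝ :=
  ∏ u ∈ (times X).filter (fun u => u < t), (1 - dN X D u / Yat X u)

/-- IPCW estimator `F̂_IPCW(t) = (1/n) ∑_i D_i 1{X_i ≤ t} / K̂(X_i−)`. -/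
def FIPCW {n : ℕ} (X : Fin n → ℝ) (D : Fin n → Bool) (t : ℝ) : ℝ :=
  (1 / (n : ℝ)) * ∑ i : Fin n,
    (if D i = true then (1 : ℝ) else 0) * (if X i ≤ t then (1 : ℝ) else 0) / Kminus X D (X i)

/-- IPCW survival estimator `S̃_IPCW(t) = (1/n) ∑_i D_i 1{X_i > t} / K̂(X_i−)`. -/
def SIPCW {n : ℕ} (X : Fin n → ℝ) (D : Fin n → Bool) (t : ℝ) : ℝ :=
  (1 / (n : ℝ)) * ∑ i : Fin n,
    (if D i = true then (1 : ℝ) else 0) * (if t < X i then (1 : ℝ) else 0) / Kminus X D (X i)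

/-- RTTR jump weight `J(v) = 1/(n · K̂(v−))`. -/
def Jw {n : ℕ} (X : Fin n → ℝ) (D : Fin n → Bool) (v : ℝ) : ℝ :=
  1 / ((n : ℝ) * Kminus X D v)

/-- Redistribute-to-the-right estimator
`Ŝ_RTTR(t) = 1 − ∑_{v ≤ t} [J(v) ΔN(v) 1{v < τ} + J(τ) Y(τ) 1{v = τ}]`. -/
def SRTTR {n : ℕ} (X : Fin n → ℝ) (D : Fin n → Bool) (t : ℝ) : ℝ :=
  1 - ∑ v ∈ (times X).filter (fun v => v ≤ t),
      (Jw X D v * dN X D v * (if v < tau X then (1 : ℝ) else 0)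
        + Jw X D (tau X) * Yat X (tau X) * (if v = tau X then (1 : ℝ) else 0))

/-! With `c(u) = ΔC(u)/Y(u+)` one has `1 − ΔC(u)/Y†(u) = (1 + c(u))⁻¹` whenever `Y(u+) > 0`,
i.e. for `u < τ`. The product `∏_{u ≤ t} (1 + c(u))⁻¹` solves the equation by telescoping, and the
equation has at most one solution: at an observed time `u` it reads
`K(u) (1 + c(u)) = 1 − ∑_{v < u} K(v) c(v)`, which fixes `K(u)` from its values at earlier times. -/

section Volterra

variable {α R : Type*} [LinearOrder α] [Field R] {S : Finset α} {c : α → R}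

theorem sum_filter_le_eq_add_sum_filter_lt {M : Type*} [AddCommMonoid M] {t : α} (ht : t ∈ S)
    (f : α → M) : ∑ u ∈ S with u ≤ t, f u = f t + ∑ u ∈ S with u < t, f u := by
  have : {u ∈ S | u ≤ t} = insert t {u ∈ S | u < t} := by
    ext u
    simp only [mem_filter, mem_insert, le_iff_lt_or_eq]
    constructor
    · rintro ⟨hu, hlt | rfl⟩ <;> simp [*]
    · rintro (rfl | ⟨hu, hlt⟩) <;> simp [*]
  rw [this, sum_insert (by simp)]

theorem prod_inv_one_add_eq_one_sub_sum (hc : ∀ u ∈ S, 1 + c u ≠ 0) (t : α) :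
    ∏ u ∈ S with u ≤ t, (1 + c u)⁻¹ =
      1 - ∑ u ∈ S with u ≤ t, (∏ v ∈ S with v ≤ u, (1 + c v)⁻¹) * c u := by
  induction S using Finset.induction_on_max generalizing t with
  | empty => simp
  | insert a s has ih =>
    have hcs : ∀ u ∈ s, 1 + c u ≠ 0 := fun u hu => hc u (mem_insert_of_mem hu)
    have hnot : a ∉ {u ∈ s | u ≤ t} := fun h => lt_irrefl a (has a (mem_filter.1 h).1)
    have hsum : ∀ b, ∑ u ∈ s with u ≤ b, (∏ v ∈ insert a s with v ≤ u, (1 + c v)⁻¹) * c u =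
        ∑ u ∈ s with u ≤ b, (∏ v ∈ s with v ≤ u, (1 + c v)⁻¹) * c u := fun b =>
      sum_congr rfl fun u hu => by
        rw [filter_insert, if_neg (has u (mem_filter.1 hu).1).not_ge]
    by_cases hat : a ≤ t
    · have hs : ∀ b, a ≤ b → {u ∈ s | u ≤ b} = s := fun b hb =>
        filter_true_of_mem fun u hu => (has u hu).le.trans hb
      have key := ih hcs t
      rw [hs t hat] at key
      rw [filter_insert, if_pos hat, prod_insert hnot, sum_insert hnot, hsum, hs t hat,
        filter_insert, if_pos le_rfl, hs a le_rfl, prod_insert (by simpa [hs t hat] using hnot), key]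
      field_simp [hc a (mem_insert_self a s)]
      ring
    · rw [filter_insert, if_neg hat, hsum, ih hcs t]

theorem eqOn_of_volterra {A : Set α} {K L : α → R} (hA : ∀ t ∈ A, ∀ u ∈ S, u ≤ t → u ∈ A)
    (hc : ∀ u ∈ S, 1 + c u ≠ 0)
    (hK : ∀ t ∈ A, K t = 1 - ∑ u ∈ S with u ≤ t, K u * c u)
    (hL : ∀ t ∈ A, L t = 1 - ∑ u ∈ S with u ≤ t, L u * c u) :
    Set.EqOn K L A := by
  have hS : ∀ N, ∀ t ∈ S, t ∈ A → #{u ∈ S | u < t} = N → K t = L t := by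
    intro N
    induction N using Nat.strong_induction_on with
    | _ N ih =>
    rintro t htS htA rfl
    have hpast : ∑ u ∈ S with u < t, K u * c u = ∑ u ∈ S with u < t, L u * c u := by
      refine sum_congr rfl fun u hu => ?_
      obtain ⟨huS, hut⟩ := mem_filter.1 hu
      have hcard : #{v ∈ S | v < u} < #{v ∈ S | v < t} := by
        refine card_lt_card ⟨fun v hv => ?_, fun h => ?_⟩
        · simp only [mem_filter] at hv ⊢
          exact ⟨hv.1, hv.2.trans hut⟩
        · exact lt_irrefl u (mem_filter.1 (h hu)).2
      rw [ih _ hcard u huS (hA t htA u huS hut.le) rfl]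
    have hKt := hK t htA
    have hLt := hL t htA
    rw [sum_filter_le_eq_add_sum_filter_lt htS] at hKt hLt
    refine mul_left_cancel₀ (hc t htS) ?_
    linear_combination hKt - hLt - hpast
  intro t ht
  rw [hK t ht, hL t ht]
  congr 1
  exact sum_congr rfl fun u hu => by
    obtain ⟨huS, hut⟩ := mem_filter.1 hu
    rw [hS _ u huS (hA t ht u huS hut) rfl]

end Volterra

theorem Yat_eq_Yplus_add {n : ℕ} (X : Fin n → ℝ) (D : Fin n → Bool) (u : ℝ) :
    Yat X u = Yplus X u + dN X D u + dC X D u := by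
  simp only [Yat, Yplus, dN, dC, ← sum_boole, ← sum_add_distrib]
  refine sum_congr rfl fun i _ => ?_
  rcases lt_trichotomy u (X i) with h | rfl | h
  · simp [h.le, h, h.ne']
  · cases D i <;> simp
  · simp [h.not_ge, h.not_gt, h.ne]

theorem Ydag_eq_Yplus_add {n : ℕ} (X : Fin n → ℝ) (D : Fin n → Bool) (u : ℝ) :
    Ydag X D u = Yplus X u + dC X D u := by
  rw [Ydag, Yat_eq_Yplus_add X D u]
  ring

theorem Yplus_pos_of_lt_tau {n : ℕ} {X : Fin n → ℝ} {u : ℝ} (hu : u ∈ times X)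
    (hut : u < tau X) : 0 < Yplus X u := by
  have hne : (times X).Nonempty := ⟨u, hu⟩
  obtain ⟨i, -, hi⟩ := mem_image.1 ((times X).max'_mem hne)
  have hτ : tau X = X i := by rw [tau, ← coe_max' hne, WithBot.unbotD_coe, hi]
  rw [hτ] at hut
  exact Nat.cast_pos.2 (card_pos.2 ⟨i, by simpa using hut⟩)

theorem one_sub_dC_div_Ydag {n : ℕ} {X : Fin n → ℝ} (D : Fin n → Bool) {u : ℝ}
    (hu : 0 < Yplus X u) : 1 - dC X D u / Ydag X D u = (1 + dC X D u / Yplus X u)⁻¹ := by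
  have hdC : 0 ≤ dC X D u := Nat.cast_nonneg _
  rw [Ydag_eq_Yplus_add]
  field_simp
  ring

theorem stmt2_general (n : ℕ) (X : Fin n → ℝ) (D : Fin n → Bool)
    (hX : ∀ i, 0 < X i) (K : ℝ → ℝ)
    (hK : ∀ t : ℝ, 0 < t → t < tau X →
      K t = 1 - ∑ u ∈ (times X).filter (fun u => u ≤ t),
          K u * dC X D u / Yplus X u) :
    ∀ t : ℝ, 0 < t → t < tau X →
      K t = ∏ u ∈ (times X).filter (fun u => u ≤ t), (1 - dC X D u / Ydag X D u) := by
  set c : ℝ → ℝ := fun u => dC X D u / Yplus X u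
  have hc : ∀ u ∈ times X, 1 + c u ≠ 0 := fun u _ =>
    (add_pos_of_pos_of_nonneg one_pos (div_nonneg (Nat.cast_nonneg _) (Nat.cast_nonneg _))).ne'
  have hA : ∀ t ∈ Set.Ioo 0 (tau X), ∀ u ∈ times X, u ≤ t → u ∈ Set.Ioo 0 (tau X) :=
    fun t ht u hu hut => by
      obtain ⟨i, -, rfl⟩ := mem_image.1 hu
      exact ⟨hX i, hut.trans_lt ht.2⟩
  have hKc : ∀ t ∈ Set.Ioo 0 (tau X), K t = 1 - ∑ u ∈ times X with u ≤ t, K u * c u :=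
    fun t ht => by simpa only [c, mul_div_assoc] using hK t ht.1 ht.2
  intro t ht0 htτ
  rw [eqOn_of_volterra hA hc hKc (fun t _ => prod_inv_one_add_eq_one_sub_sum hc t) ⟨ht0, htτ⟩]
  refine prod_congr rfl fun u hu => ?_
  obtain ⟨huX, hut⟩ := mem_filter.1 hu
  rw [one_sub_dC_div_Ydag D (Yplus_pos_of_lt_tau huX (hut.trans_lt htτ))]

/-- the anticipating Volterra equation has a unique solution on `(0, τ)`:
any solution equals the censoring product-limit estimator there. -/
theorem stmt2 (n : ℕ) (hn : 0 < n) (X : Fin n → ℝ) (D : Fin n → Bool)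
    (hX : ∀ i, 0 < X i) (K : ℝ → ℝ)
    (hK : ∀ t : ℝ, 0 < t → t < tau X →
      K t = 1 - ∑ u ∈ (times X).filter (fun u => u ≤ t),
          K u * dC X D u / Yplus X u) :
    ∀ t : ℝ, 0 < t → t < tau X →
      K t = ∏ u ∈ (times X).filter (fun u => u ≤ t), (1 - dC X D u / Ydag X D u) :=
  stmt2_general n X D hX K hK

end SurvStmt
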